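/- Let R be a commutative ring with unit of characteristic zero. Let I be the set of prime numbers p such that R is uniquely p-divisible (i.e., the map x ↦ p•x is a bijection of R), and let S = ℤ[I⁻¹] be the localization of the integers at the multiplicative submonoid generated by I. Then an integer k is invertible (a unit) in R if and only if the image of k in S is invertible. -/

import Mathlib

/-- The set of integers `p` that are (the images of) prime numbers such that `R` is
uniquely `p`-divisible, i.e. the map `x ↦ p • x` is a bijection of `R`. -/
def uniquelyDivisiblePrimes (R : Type*) [CommRing R] : Set ℤ :=
  (fun p : ℕ => (p : ℤ)) '' {p : ℕ | p.Prime ∧ Function.Bijective fun x : R => p • x}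

/-!
A prime `p` lies in `uniquelyDivisiblePrimes R` exactly when it is a unit of `R`. So the
submonoid `M` it generates consists of units of `R`, and `ℤ → R` lifts through `ℤ[M⁻¹]`.
Conversely, if `k` is a unit of `R` then so is every prime factor of `|k|`, hence `|k| ∈ M`
and `k` is a unit of `ℤ[M⁻¹]`.
-/

theorem nsmul_bijective_iff_isUnit_natCast {R : Type*} [Semiring R] (n : ℕ) :
    (Function.Bijective fun x : R => n • x) ↔ IsUnit (n : R) := by
  simp only [nsmul_eq_mul]
  exact IsUnit.isUnit_iff_mulLeft_bijective.symm

section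

variable {R : Type*} [CommRing R]

theorem isUnit_intCast_of_mem_closure_uniquelyDivisiblePrimes {m : ℤ}
    (hm : m ∈ Submonoid.closure (uniquelyDivisiblePrimes R)) : IsUnit (m : R) := by
  induction hm using Submonoid.closure_induction with
  | mem _ hp =>
    obtain ⟨p, ⟨-, hbij⟩, rfl⟩ := hp
    simpa using (nsmul_bijective_iff_isUnit_natCast p).mp hbij
  | one => simp
  | mul _ _ _ _ ha hb => exact_mod_cast ha.mul hb

theorem natCast_mem_closure_uniquelyDivisiblePrimes [Nontrivial R] {n : ℕ}
    (hn : IsUnit (n : R)) : (n : ℤ) ∈ Submonoid.closure (uniquelyDivisiblePrimes R) := by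
  induction n using Nat.recOnMul with
  | zero => simp at hn
  | one => exact one_mem _
  | prime p hp =>
    exact Submonoid.subset_closure
      ⟨p, ⟨hp, (nsmul_bijective_iff_isUnit_natCast p).mpr hn⟩, rfl⟩
  | mul a b ha hb =>
    rw [Nat.cast_mul, IsUnit.mul_iff] at hn
    exact_mod_cast mul_mem (ha hn.1) (hb hn.2)

end

/-- Let `R` be a commutative ring with unit of characteristic zero, `I` the set of primes
`p` such that `R` is uniquely `p`-divisible, and `S = ℤ[I⁻¹]` the localization of `ℤ` at
the multiplicative submonoid generated by `I`.  Then an integer `k` is invertible in `R`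
if and only if its image in `S` is invertible. -/
theorem int_isUnit_iff_isUnit_localization (R : Type*) [CommRing R] [CharP R 0] (k : ℤ) :
    IsUnit (k : R) ↔
      IsUnit (algebraMap ℤ
        (Localization (Submonoid.closure (uniquelyDivisiblePrimes R))) k) := by
  have : Nontrivial R := CharP.nontrivial_of_char_ne_one zero_ne_one
  set M := Submonoid.closure (uniquelyDivisiblePrimes R)
  have hassoc := Int.associated_natAbs k
  constructor
  · intro hk
    have hn : IsUnit (k.natAbs : R) := by
      simpa using (hassoc.map (Int.castRingHom R)).isUnit_iff.mp hk
    exact (hassoc.map (algebraMap ℤ (Localization M))).isUnit_iff.mpr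
      (IsLocalization.map_units _ ⟨_, natCast_mem_closure_uniquelyDivisiblePrimes hn⟩)
  · intro hk
    have hlift := hk.map (IsLocalization.lift (M := M) (S := Localization M)
      (g := Int.castRingHom R) fun m => isUnit_intCast_of_mem_closure_uniquelyDivisiblePrimes m.2)
    rwa [IsLocalization.lift_eq, eq_intCast] at hlift
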